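/- arXiv:2312.17303 — 3 statements merged into one kernel-verified Lean document; each statement's English description precedes it below -/
import Mathlib

section
/- For 1 ≤ i ≤ m-1, the operator δ_i = (h - i - 1)x^i in A_{1,x} maps A(m) into A(m), and moreover for any polynomial f ∈ K[h], the operator f(h)x^i maps A(m) into A(m) if and only if f is divisible by h - i - 1. -/
open Polynomial LaurentPolynomial

/-- The operator `f(h)x^a` of the skew Laurent ring `K[h][x,x⁻¹;σ]`, `σ(h) = h-1`,
acting on `K[x,x⁻¹]` by `(f(h)x^a) ∗ x^j = f(a+j+1) x^{a+j}`
(so that `h ∗ x^j = (j+1) x^j` and `x^{±1} ∗ x^j = x^{j±1}`). -/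
noncomputable def op (K : Type*) [Field K] (f : Polynomial K) (a : ℤ) :
    LaurentPolynomial K →ₗ[K] LaurentPolynomial K :=
  (Finsupp.lsum K fun j : ℤ =>
    f.eval ((a + j + 1 : ℤ) : K) •
      LinearMap.toSpanSingleton K (LaurentPolynomial K) (LaurentPolynomial.T (a + j))) ∘ₗ
    (AddMonoidAlgebra.coeffLinearEquiv K).toLinearMap

/-- `A(m) = K + Σ_{i ≥ m} K x^i`, as a subspace of `K[x,x⁻¹]`. -/
noncomputable def Am (K : Type*) [Field K] (m : ℕ) : Submodule K (LaurentPolynomial K) :=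
  Submodule.span K {p : LaurentPolynomial K | ∃ i : ℤ, (i = 0 ∨ (m : ℤ) ≤ i) ∧ p = T i}

/-! `f(h)x^a` sends `x^j` to `f(a+j+1) x^{a+j}`, so it preserves `A(m)` iff every basis vector
`x^j` of `A(m)` is either killed or sent to a basis vector of `A(m)`. For `0 < a < m` the only
vector at risk is `x^0`, whose image `f(a+1) x^a` falls into the gap `0 < a < m` of `A(m)`; so the
condition is exactly `f(a+1) = 0`, i.e. `h - a - 1 ∣ f`. -/

section

variable {K : Type*} [Field K]

lemma op_T (f : K[X]) (a j : ℤ) :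
    op K f a (T j) = f.eval ((a + j + 1 : ℤ) : K) • T (a + j) := by
  have hT : AddMonoidAlgebra.coeffLinearEquiv K (T j : K[T;T⁻¹]) = Finsupp.single j 1 := rfl
  rw [op, LinearMap.comp_apply, LinearEquiv.coe_coe, hT]
  erw [Finsupp.lsum_single]
  simp [LinearMap.toSpanSingleton_apply]

lemma T_mem_Am {m : ℕ} {j : ℤ} (hj : j = 0 ∨ (m : ℤ) ≤ j) : T j ∈ Am K m :=
  Submodule.subset_span ⟨j, hj, rfl⟩

lemma coeff_eq_zero_of_mem_Am {m : ℕ} {k : ℤ} (hk0 : k ≠ 0) (hkm : k < m) {p : K[T;T⁻¹]}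
    (hp : p ∈ Am K m) : p.coeff k = 0 := by
  have : Am K m ≤ LinearMap.ker
      (Finsupp.lapply k ∘ₗ (AddMonoidAlgebra.coeffLinearEquiv K).toLinearMap) := by
    rw [Am, Submodule.span_le]
    rintro _ ⟨j, hj, rfl⟩
    have hjk : j ≠ k := by rintro rfl; omega
    show (T j : K[T;T⁻¹]).coeff k = 0
    rw [T_apply, if_neg hjk]
  exact this hp

lemma smul_T_mem_Am_iff {m : ℕ} {c : K} {k : ℤ} :
    c • T k ∈ Am K m ↔ c = 0 ∨ k = 0 ∨ (m : ℤ) ≤ k := by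
  constructor
  · intro h
    by_contra! hc
    have := coeff_eq_zero_of_mem_Am hc.2.1 hc.2.2 h
    simp [T_apply, hc.1] at this
  · rintro (rfl | hk)
    · rw [zero_smul]; exact Submodule.zero_mem _
    · exact Submodule.smul_mem _ _ (T_mem_Am hk)

lemma Am_le_iff {m : ℕ} {p : Submodule K K[T;T⁻¹]} :
    Am K m ≤ p ↔ ∀ j : ℤ, (j = 0 ∨ (m : ℤ) ≤ j) → T j ∈ p := by
  rw [Am, Submodule.span_le]
  constructor
  · exact fun h j hj => h ⟨j, hj, rfl⟩
  · rintro h _ ⟨j, hj, rfl⟩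
    exact h j hj

lemma map_op_le_Am_iff {m : ℕ} (f : K[X]) (a : ℤ) :
    Submodule.map (op K f a) (Am K m) ≤ Am K m ↔
      ∀ j : ℤ, (j = 0 ∨ (m : ℤ) ≤ j) →
        f.eval ((a + j + 1 : ℤ) : K) = 0 ∨ a + j = 0 ∨ (m : ℤ) ≤ a + j := by
  simp only [Submodule.map_le_iff_le_comap, Am_le_iff, Submodule.mem_comap, op_T,
    smul_T_mem_Am_iff]

lemma map_op_le_Am_iff_isRoot {m : ℕ} {a : ℤ} (ha : 0 < a) (ham : a < m) (f : K[X]) :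
    Submodule.map (op K f a) (Am K m) ≤ Am K m ↔ f.IsRoot ((a : K) + 1) := by
  rw [map_op_le_Am_iff, IsRoot.def]
  constructor
  · intro h
    have := h 0 (Or.inl rfl)
    push_cast at this
    simpa [ha.ne', ham.not_ge] using this
  · intro h j hj
    rcases hj with rfl | hj
    · left; push_cast; simpa using h
    · right; right; omega

end

theorem stmt3_general (K : Type*) [Field K] (m : ℕ)
    (i : ℕ) (h1 : 1 ≤ i) (h2 : i ≤ m - 1) :
    Submodule.map (op K (X - Polynomial.C ((i : K) + 1)) (i : ℤ)) (Am K m) ≤ Am K m ∧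
      ∀ f : Polynomial K,
        (Submodule.map (op K f (i : ℤ)) (Am K m) ≤ Am K m ↔
          (X - Polynomial.C ((i : K) + 1)) ∣ f) := by
  have hdvd (f : K[X]) : Submodule.map (op K f (i : ℤ)) (Am K m) ≤ Am K m ↔
      (X - Polynomial.C ((i : K) + 1)) ∣ f := by
    have := map_op_le_Am_iff_isRoot (m := m) (a := i) (by omega) (by omega) f
    rwa [Int.cast_natCast, ← dvd_iff_isRoot] at this
  exact ⟨(hdvd _).2 dvd_rfl, hdvd⟩

/-- for `1 ≤ i ≤ m-1` the operator `δ_i = (h-i-1)x^i` maps `A(m)` into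
`A(m)`, and for `f ∈ K[h]`, the operator `f(h)x^i` maps `A(m)` into `A(m)` if and
only if `h - i - 1` divides `f`. -/
theorem stmt3 (K : Type*) [Field K] [CharZero K] (m : ℕ) (hm : 2 ≤ m)
    (i : ℕ) (h1 : 1 ≤ i) (h2 : i ≤ m - 1) :
    Submodule.map (op K (X - Polynomial.C ((i : K) + 1)) (i : ℤ)) (Am K m) ≤ Am K m ∧
      ∀ f : Polynomial K,
        (Submodule.map (op K f (i : ℤ)) (Am K m) ≤ Am K m ↔
          (X - Polynomial.C ((i : K) + 1)) ∣ f) :=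
  stmt3_general K m i h1 h2
end

section
/- The generalized Weyl algebra 𝒜 = K[h][X, Y; σ^m, a] with σ(h) = h-1 and a = (h+m-1)(h-2)(h-3)⋯(h-m) is a simple ring. -/
/-!
Every element of the generalized Weyl algebra `K[h][X, Y; σ, a]`, `σ(h) = h - c`, is uniquely a
finite sum `∑ₙ pₙ(h) vₙ` with `vₙ = Xⁿ` for `n ≥ 0` and `vₙ = Y⁻ⁿ` for `n < 0`; uniqueness comes
from the action on `⊕ₙ K[h] eₙ` with `vₙ e₀ = eₙ`. Since `vₙ h = (h - n c) vₙ`, in characteristic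
zero the operators `ad h - n c` cut a nonzero element of a two-sided ideal `I` down to a single
term `p(h) vₙ`, and multiplying by `v₋ₙ` gives `0 ≠ I ∩ K[h]`. Conjugating by `X` and `Y`, this
ideal of `K[h]` is stable under `g ↦ g(h + c) a` and `g ↦ (g a)(h - c)`, so its generator `g`
divides both. A root `λ` of `g` would start a finite string of roots `λ + k c` of `g`, whose two
ends force roots of `a` a positive multiple of `c` apart. For `a = (h+m-1)(h-2)⋯(h-m)` and
`c = m` the roots `1 - m, 2, …, m` are pairwise incongruent mod `m`, so `g` is a unit and
`1 ∈ I`.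
-/

open Polynomial

/-- The defining element `a = (h+m-1)(h-2)(h-3)⋯(h-m)`. -/
noncomputable def aPoly (K : Type*) [Field K] (m : ℕ) : Polynomial K :=
  (X + C ((m : K) - 1)) * ∏ j ∈ Finset.Icc 2 m, (X - C (j : K))

/-- Defining relations of the generalized Weyl algebra
`𝒜 = K[h][X,Y;σ^m,a]`, `σ(h) = h-1`, `a = (h+m-1)(h-2)⋯(h-m)`: generators
`h` (index 0), `X` (index 1), `Y` (index 2) with `Xh = (h-m)X`, `Yh = (h+m)Y`,
`YX = a`, `XY = σ^m(a) = a(h-m)`. -/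
inductive gwaRel2 (K : Type*) [Field K] (m : ℕ) :
    FreeAlgebra K (Fin 3) → FreeAlgebra K (Fin 3) → Prop
  | xh : gwaRel2 K m (FreeAlgebra.ι K 1 * FreeAlgebra.ι K 0)
      ((FreeAlgebra.ι K 0 - algebraMap K _ (m : K)) * FreeAlgebra.ι K 1)
  | yh : gwaRel2 K m (FreeAlgebra.ι K 2 * FreeAlgebra.ι K 0)
      ((FreeAlgebra.ι K 0 + algebraMap K _ (m : K)) * FreeAlgebra.ι K 2)
  | yx : gwaRel2 K m (FreeAlgebra.ι K 2 * FreeAlgebra.ι K 1)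
      (aeval (FreeAlgebra.ι K 0) (aPoly K m))
  | xy : gwaRel2 K m (FreeAlgebra.ι K 1 * FreeAlgebra.ι K 2)
      (aeval (FreeAlgebra.ι K 0) ((aPoly K m).comp (X - C (m : K))))

/-- The generalized Weyl algebra `𝒜 = K[h][X,Y;σ^m, (h+m-1)(h-2)⋯(h-m)]`. -/
abbrev GWA2 (K : Type*) [Field K] (m : ℕ) := RingQuot (gwaRel2 K m)

def RootsIncongruentMod {F : Type*} [Field F] (a : F[X]) (c : F) : Prop :=
  ∀ α β : F, a.IsRoot α → a.IsRoot β → ∀ n : ℤ, α - β = n • c → n = 0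

theorem RootsIncongruentMod.ne_zero {F : Type*} [Field F] {a : F[X]} {c : F}
    (ha : RootsIncongruentMod a c) : a ≠ 0 := by
  rintro rfl
  simpa using ha c 0 (by simp) (by simp) 1 (by simp)

/-- If `G(x) = 0` then `G(x + c) = 0` unless `a(x) = 0`, and `G(x - c) = 0` unless
`a(x - c) = 0`; so the roots of `G` on `x + ℤc` would end at a root of `a` on both sides. -/
theorem not_isRoot_of_dvd_comp {F : Type*} [Field F] [CharZero F] {a G : F[X]} {c : F}
    (hc : c ≠ 0) (ha : RootsIncongruentMod a c) (hG : G ≠ 0)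
    (h₁ : G ∣ G.comp (X + C c) * a) (h₂ : G ∣ (G * a).comp (X - C c)) (x : F) :
    ¬ G.IsRoot x := by
  intro hx
  set S : Set ℤ := {k | G.IsRoot (x + k • c)}
  have hS : S.Finite := (G.finite_setOfPred_isRoot hG).preimage
    fun k _ l _ hkl => smul_left_injective ℤ hc (add_left_cancel hkl)
  have hS0 : (0 : ℤ) ∈ S := by simpa [S] using hx
  obtain ⟨kmax, hkmax, hmax⟩ := S.exists_max_image id hS ⟨0, hS0⟩
  obtain ⟨kmin, hkmin, hmin⟩ := S.exists_min_image id hS ⟨0, hS0⟩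
  have htop : a.IsRoot (x + kmax • c) := by
    have hnext : ¬ G.IsRoot (x + (kmax + 1) • c) := fun h => by simpa using hmax _ h
    rw [add_zsmul, one_zsmul, ← add_assoc] at hnext
    have := hkmax.dvd h₁
    simp only [IsRoot, eval_mul, eval_comp, eval_add, eval_X, eval_C, mul_eq_zero] at this
    exact this.resolve_left hnext
  have hbot : a.IsRoot (x + kmin • c - c) := by
    have hprev : ¬ G.IsRoot (x + (kmin - 1) • c) := fun h => by simpa using hmin _ h
    rw [sub_zsmul, one_zsmul, ← sub_eq_add_neg, ← add_sub_assoc] at hprev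
    have := hkmin.dvd h₂
    simp only [IsRoot, eval_mul, eval_comp, eval_sub, eval_X, eval_C, mul_eq_zero] at this
    exact this.resolve_left hprev
  have hgap := ha _ _ htop hbot (kmax - kmin + 1) (by rw [add_zsmul, sub_zsmul]; abel)
  have := hmax kmin hkmin
  simp only [id] at this
  omega

theorem isUnit_of_dvd_comp {K : Type*} [Field K] [CharZero K] {a g : K[X]} {c : K}
    (hc : c ≠ 0)
    (ha : RootsIncongruentMod (a.map (algebraMap K (AlgebraicClosure K))) (algebraMap K _ c))
    (hg : g ≠ 0) (h₁ : g ∣ g.comp (X + C c) * a) (h₂ : g ∣ (g * a).comp (X - C c)) :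
    IsUnit g := by
  set φ := algebraMap K (AlgebraicClosure K)
  by_contra hu
  obtain ⟨x, hx⟩ := IsAlgClosed.exists_root (g.map φ)
    (by rwa [degree_map, Ne, ← isUnit_iff_degree_eq_zero])
  refine not_isRoot_of_dvd_comp ((map_ne_zero_iff φ φ.injective).mpr hc) ha
    ((Polynomial.map_ne_zero_iff φ.injective).mpr hg) ?_ ?_ x hx
  · simpa [Polynomial.map_comp] using Polynomial.map_dvd φ h₁
  · simpa [Polynomial.map_comp] using Polynomial.map_dvd φ h₂

theorem Ideal.eq_top_of_comp_mul_mem {K : Type*} [Field K] [CharZero K] {a : K[X]} {c : K}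
    (hc : c ≠ 0)
    (ha : RootsIncongruentMod (a.map (algebraMap K (AlgebraicClosure K))) (algebraMap K _ c))
    {J : Ideal K[X]} (hJ : J ≠ ⊥) (h₁ : ∀ p ∈ J, p.comp (X + C c) * a ∈ J)
    (h₂ : ∀ p ∈ J, (p * a).comp (X - C c) ∈ J) : J = ⊤ := by
  have hgJ := Submodule.IsPrincipal.generator_mem J
  refine J.eq_top_of_isUnit_mem hgJ (isUnit_of_dvd_comp hc ha ?_ ?_ ?_)
  · exact (Submodule.IsPrincipal.eq_bot_iff_generator_eq_zero J).not.mp hJ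
  · exact (Submodule.IsPrincipal.mem_iff_generator_dvd J).mp (h₁ _ hgJ)
  · exact (Submodule.IsPrincipal.mem_iff_generator_dvd J).mp (h₂ _ hgJ)

theorem SemiconjBy.aeval {R A : Type*} [CommSemiring R] [Semiring A] [Algebra R A] {x y z : A}
    (h : SemiconjBy x y z) (p : R[X]) : SemiconjBy x (aeval y p) (aeval z p) := by
  induction p using Polynomial.induction_on' with
  | add p q hp hq => simpa only [map_add] using hp.add_right hq
  | monomial n r =>
      simpa only [aeval_monomial] using
        SemiconjBy.mul_right (Algebra.commute_algebraMap_right r x) (h.pow_right n)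

lemma aeval_comp_X_add_C {R A : Type*} [CommSemiring R] [Semiring A] [Algebra R A] (x : A)
    (p : R[X]) (r : R) : aeval x (p.comp (X + C r)) = aeval (x + algebraMap R A r) p := by
  simp [aeval_comp]

lemma aeval_comp_X_sub_C {R A : Type*} [CommRing R] [Ring A] [Algebra R A] (x : A)
    (p : R[X]) (r : R) : aeval x (p.comp (X - C r)) = aeval (x - algebraMap R A r) p := by
  simp [aeval_comp]

theorem RingQuot.submodule_eq_top_of_mul_ι_mem {R ι : Type*} [CommSemiring R]
    {r : FreeAlgebra R ι → FreeAlgebra R ι → Prop} (S : Submodule R (RingQuot r)) (h1 : 1 ∈ S)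
    (hι : ∀ s ∈ S, ∀ i, s * RingQuot.mkAlgHom R r (FreeAlgebra.ι R i) ∈ S) : S = ⊤ := by
  have hmul : ∀ z : FreeAlgebra R ι, ∀ s ∈ S, s * RingQuot.mkAlgHom R r z ∈ S := by
    intro z
    induction z using FreeAlgebra.induction with
    | grade0 x =>
        intro s hs
        rw [AlgHom.commutes, ← Algebra.commutes, ← Algebra.smul_def]
        exact S.smul_mem x hs
    | grade1 i => exact fun s hs => hι s hs i
    | mul z w hz hw =>
        intro s hs
        rw [map_mul, ← mul_assoc]
        exact hw _ (hz s hs)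
    | add z w hz hw =>
        intro s hs
        rw [map_add, mul_add]
        exact S.add_mem (hz s hs) (hw s hs)
  refine Submodule.eq_top_iff'.mpr fun y => ?_
  obtain ⟨z, rfl⟩ := RingQuot.mkAlgHom_surjective R r y
  simpa using hmul z 1 h1

namespace ShiftGWA

/-- The relations of `K[h][X, Y; σ, a]` with `σ(h) = h - c`, the generators `h, X, Y` being
`ι 0, ι 1, ι 2`. -/
inductive Rel (K : Type*) [Field K] (c : K) (a : K[X]) :
    FreeAlgebra K (Fin 3) → FreeAlgebra K (Fin 3) → Prop
  | xh : Rel K c a (FreeAlgebra.ι K 1 * FreeAlgebra.ι K 0)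
      ((FreeAlgebra.ι K 0 - algebraMap K _ c) * FreeAlgebra.ι K 1)
  | yh : Rel K c a (FreeAlgebra.ι K 2 * FreeAlgebra.ι K 0)
      ((FreeAlgebra.ι K 0 + algebraMap K _ c) * FreeAlgebra.ι K 2)
  | yx : Rel K c a (FreeAlgebra.ι K 2 * FreeAlgebra.ι K 1) (aeval (FreeAlgebra.ι K 0) a)
  | xy : Rel K c a (FreeAlgebra.ι K 1 * FreeAlgebra.ι K 2)
      (aeval (FreeAlgebra.ι K 0) (a.comp (X - C c)))

end ShiftGWA

abbrev ShiftGWA (K : Type*) [Field K] (c : K) (a : K[X]) := RingQuot (ShiftGWA.Rel K c a)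

namespace ShiftGWA

variable {K : Type*} [Field K] {c : K} {a : K[X]}

variable (K c a) in
noncomputable def gen (i : Fin 3) : ShiftGWA K c a :=
  RingQuot.mkAlgHom K (Rel K c a) (FreeAlgebra.ι K i)

local notation "𝐡" => gen K c a 0
local notation "𝐱" => gen K c a 1
local notation "𝐲" => gen K c a 2
local notation "lsmul" => Algebra.lsmul K K (ℤ →₀ K[X])

lemma x_mul_h : 𝐱 * 𝐡 = (𝐡 - algebraMap K _ c) * 𝐱 := by
  simpa [gen] using RingQuot.mkAlgHom_rel K (Rel.xh (c := c) (a := a))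

lemma y_mul_h : 𝐲 * 𝐡 = (𝐡 + algebraMap K _ c) * 𝐲 := by
  simpa [gen] using RingQuot.mkAlgHom_rel K (Rel.yh (c := c) (a := a))

lemma y_mul_x : 𝐲 * 𝐱 = aeval 𝐡 a := by
  simpa [gen, ← aeval_algHom_apply] using RingQuot.mkAlgHom_rel K (Rel.yx (c := c) (a := a))

lemma x_mul_y : 𝐱 * 𝐲 = aeval 𝐡 (a.comp (X - C c)) := by
  simpa [gen, ← aeval_algHom_apply] using
    RingQuot.mkAlgHom_rel K (Rel.xy (c := c) (a := a))

lemma semiconjBy_x_pow (k : ℕ) : SemiconjBy (𝐱 ^ k) 𝐡 (𝐡 - algebraMap K _ (k * c)) := by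
  induction k with
  | zero => simp [SemiconjBy]
  | succ k ih =>
      have hx := SemiconjBy.aeval (x_mul_h (c := c) (a := a)) (X - C ((k : K) * c))
      simp only [map_sub, aeval_X, aeval_C] at hx
      rw [pow_succ', Nat.cast_succ, add_mul, one_mul, map_add, ← sub_sub, sub_right_comm]
      exact hx.mul_left ih

lemma semiconjBy_y_pow (k : ℕ) : SemiconjBy (𝐲 ^ k) 𝐡 (𝐡 + algebraMap K _ (k * c)) := by
  induction k with
  | zero => simp [SemiconjBy]
  | succ k ih =>
      have hy := SemiconjBy.aeval (y_mul_h (c := c) (a := a)) (X + C ((k : K) * c))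
      simp only [map_add, aeval_X, aeval_C] at hy
      rw [pow_succ', Nat.cast_succ, add_mul, one_mul, map_add, ← add_assoc, add_right_comm]
      exact hy.mul_left ih

variable (K c a) in
noncomputable def xyPow : ℤ → ShiftGWA K c a
  | (k : ℕ) => 𝐱 ^ k
  | .negSucc k => 𝐲 ^ (k + 1)

@[simp] lemma xyPow_zero : xyPow K c a 0 = 1 := pow_zero _

@[simp] lemma xyPow_natCast (k : ℕ) : xyPow K c a k = 𝐱 ^ k := rfl

lemma xyPow_neg_natCast (k : ℕ) : xyPow K c a (-k) = 𝐲 ^ k := by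
  cases k
  · simp
  · rfl

lemma semiconjBy_xyPow (n : ℤ) :
    SemiconjBy (xyPow K c a n) 𝐡 (𝐡 - algebraMap K _ (n * c)) := by
  cases n with
  | ofNat k => simpa using semiconjBy_x_pow (K := K) (c := c) (a := a) k
  | negSucc k =>
      have hk : (Int.negSucc k : K) * c = -(((k + 1 : ℕ) : K) * c) := by
        push_cast [Int.cast_negSucc]
        ring
      rw [hk, map_neg, sub_neg_eq_add]
      exact semiconjBy_y_pow (K := K) (c := c) (a := a) (k + 1)

lemma x_mul_aeval (p : K[X]) : 𝐱 * aeval 𝐡 p = aeval 𝐡 (p.comp (X - C c)) * 𝐱 := by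
  rw [aeval_comp_X_sub_C]
  exact SemiconjBy.aeval x_mul_h p

lemma y_mul_aeval (p : K[X]) : 𝐲 * aeval 𝐡 p = aeval 𝐡 (p.comp (X + C c)) * 𝐲 := by
  rw [aeval_comp_X_add_C]
  exact SemiconjBy.aeval y_mul_h p

lemma xyPow_mul_aeval (n : ℤ) (p : K[X]) :
    xyPow K c a n * aeval 𝐡 p = aeval 𝐡 (p.comp (X - C (n * c))) * xyPow K c a n := by
  rw [aeval_comp_X_sub_C]
  exact (semiconjBy_xyPow n).aeval p

variable (c a) in
/-- The module `⊕ₙ K[h] eₙ` on which `xyPow n` will send `e₀` to `eₙ`: the factors `σ(a)` for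
`n < 0` and `a` for `n > 0` make `yx = a` and `xy = σ(a)` hold. -/
noncomputable def xOp : Module.End K (ℤ →₀ K[X]) :=
  Finsupp.lsum K fun n => Finsupp.lsingle (n + 1) ∘ₗ
    LinearMap.mulLeft K (if 0 ≤ n then 1 else a.comp (X - C c)) ∘ₗ (aeval (X - C c)).toLinearMap

variable (c a) in
noncomputable def yOp : Module.End K (ℤ →₀ K[X]) :=
  Finsupp.lsum K fun n => Finsupp.lsingle (n - 1) ∘ₗ
    LinearMap.mulLeft K (if n ≤ 0 then 1 else a) ∘ₗ (aeval (X + C c)).toLinearMap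

lemma xOp_single (n : ℤ) (p : K[X]) :
    xOp c a (Finsupp.single n p) =
      Finsupp.single (n + 1) ((if 0 ≤ n then 1 else a.comp (X - C c)) * p.comp (X - C c)) := by
  simp [xOp, comp_eq_aeval]

lemma yOp_single (n : ℤ) (p : K[X]) :
    yOp c a (Finsupp.single n p) =
      Finsupp.single (n - 1) ((if n ≤ 0 then 1 else a) * p.comp (X + C c)) := by
  simp [yOp, comp_eq_aeval]

lemma xOp_mul_lsmul (q : K[X]) : xOp c a * lsmul q = lsmul (q.comp (X - C c)) * xOp c a := by
  refine Finsupp.lhom_ext fun n p => ?_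
  simp only [Module.End.mul_apply, Algebra.lsmul_apply, Finsupp.smul_single, smul_eq_mul,
    xOp_single, mul_comp]
  congr 1
  ring

lemma yOp_mul_lsmul (q : K[X]) : yOp c a * lsmul q = lsmul (q.comp (X + C c)) * yOp c a := by
  refine Finsupp.lhom_ext fun n p => ?_
  simp only [Module.End.mul_apply, Algebra.lsmul_apply, Finsupp.smul_single, smul_eq_mul,
    yOp_single, mul_comp]
  congr 1
  ring

lemma yOp_mul_xOp : yOp c a * xOp c a = lsmul a := by
  refine Finsupp.lhom_ext fun n p => ?_
  simp only [Module.End.mul_apply, xOp_single, yOp_single, Algebra.lsmul_apply,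
    Finsupp.smul_single, smul_eq_mul, add_sub_cancel_right, mul_comp, comp_assoc]
  split_ifs <;> first | omega | simp [comp_assoc]

lemma xOp_mul_yOp : xOp c a * yOp c a = lsmul (a.comp (X - C c)) := by
  refine Finsupp.lhom_ext fun n p => ?_
  simp only [Module.End.mul_apply, xOp_single, yOp_single, Algebra.lsmul_apply,
    Finsupp.smul_single, smul_eq_mul, sub_add_cancel, mul_comp, comp_assoc]
  split_ifs <;> first | omega | simp [mul_comm]

lemma aeval_lsmul_X (p : K[X]) : aeval (lsmul (X : K[X])) p = lsmul p := by
  rw [aeval_algHom_apply, aeval_X_left_apply]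

lemma lsmul_X_sub_C : lsmul (X - C c) = lsmul (X : K[X]) - algebraMap K _ c := by
  rw [map_sub, ← algebraMap_eq, AlgHom.commutes]

lemma lsmul_X_add_C : lsmul (X + C c) = lsmul (X : K[X]) + algebraMap K _ c := by
  rw [map_add, ← algebraMap_eq, AlgHom.commutes]

variable (K c a) in
noncomputable def rep : ShiftGWA K c a →ₐ[K] Module.End K (ℤ →₀ K[X]) :=
  RingQuot.liftAlgHom K ⟨FreeAlgebra.lift K ![lsmul (X : K[X]), xOp c a, yOp c a], by
    rintro _ _ (_ | _ | _ | _) <;>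
      simp only [map_mul, map_sub, map_add, AlgHom.commutes, FreeAlgebra.lift_ι_apply,
        ← aeval_algHom_apply, Matrix.cons_val_zero, Matrix.cons_val_one, Matrix.cons_val_two,
        Matrix.head_cons, Matrix.tail_cons, aeval_lsmul_X]
    · rw [xOp_mul_lsmul, X_comp, lsmul_X_sub_C]
    · rw [yOp_mul_lsmul, X_comp, lsmul_X_add_C]
    · exact yOp_mul_xOp
    · exact xOp_mul_yOp⟩

lemma rep_gen (i : Fin 3) :
    rep K c a (gen K c a i) = ![lsmul (X : K[X]), xOp c a, yOp c a] i := by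
  simp [rep, gen, RingQuot.liftAlgHom_mkAlgHom_apply]

lemma rep_aeval_h (p : K[X]) : rep K c a (aeval 𝐡 p) = lsmul p := by
  rw [← aeval_algHom_apply, rep_gen, Matrix.cons_val_zero, aeval_lsmul_X]

lemma rep_xyPow_single_zero (n : ℤ) :
    rep K c a (xyPow K c a n) (Finsupp.single 0 1) = Finsupp.single n 1 := by
  cases n with
  | ofNat k =>
      induction k with
      | zero => simp
      | succ k ih =>
          simp only [Int.ofNat_eq_natCast, xyPow_natCast] at ih ⊢
          rw [pow_succ', map_mul, Module.End.mul_apply, ih, rep_gen]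
          simp [xOp_single]
  | negSucc k =>
      induction k with
      | zero => simp [xyPow, rep_gen, yOp_single]
      | succ k ih =>
          have hy : xyPow K c a (.negSucc (k + 1)) = 𝐲 * xyPow K c a (.negSucc k) := pow_succ' _ _
          rw [hy, map_mul, Module.End.mul_apply, ih, rep_gen]
          simp [yOp_single, Int.negSucc_le_zero, Int.negSucc_sub_one]

lemma xyPow_mul_gen (n : ℤ) (i : Fin 3) :
    ∃ (p : K[X]) (n' : ℤ), xyPow K c a n * gen K c a i = aeval 𝐡 p * xyPow K c a n' := by
  match i with
  | 0 =>
    exact ⟨X - C (n * c), n, by simpa using (semiconjBy_xyPow (K := K) (c := c) (a := a) n).eq⟩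
  | 1 =>
    cases n with
    | ofNat k =>
        exact ⟨1, (k + 1 : ℕ), by
          rw [Int.ofNat_eq_natCast, xyPow_natCast, xyPow_natCast, pow_succ, map_one, one_mul]⟩
    | negSucc k =>
        refine ⟨a.comp (X - C (((-k : ℤ) : K) * c)), -k, ?_⟩
        rw [show xyPow K c a (.negSucc k) = xyPow K c a (-k) * 𝐲 by
          rw [xyPow_neg_natCast]; exact pow_succ _ _]
        rw [mul_assoc, y_mul_x, xyPow_mul_aeval]
  | 2 =>
    cases n with
    | ofNat k =>
        cases k with
        | zero => exact ⟨1, .negSucc 0, by simp [xyPow]⟩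
        | succ k =>
            refine ⟨(a.comp (X - C c)).comp (X - C (((k : ℤ) : K) * c)), k, ?_⟩
            simp only [Int.ofNat_eq_natCast, xyPow_natCast]
            rw [pow_succ, mul_assoc, x_mul_y, ← xyPow_natCast, xyPow_mul_aeval]
    | negSucc k => exact ⟨1, .negSucc (k + 1), by simp [xyPow, pow_succ]⟩

variable (K c a) in
noncomputable def ofCoeffs : (ℤ →₀ K[X]) →ₗ[K] ShiftGWA K c a :=
  Finsupp.lsum K fun n => LinearMap.mulRight K (xyPow K c a n) ∘ₗ (aeval 𝐡).toLinearMap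

@[simp] lemma ofCoeffs_single (n : ℤ) (p : K[X]) :
    ofCoeffs K c a (Finsupp.single n p) = aeval 𝐡 p * xyPow K c a n := by
  simp [ofCoeffs]

lemma rep_ofCoeffs_single_zero (d : ℤ →₀ K[X]) :
    rep K c a (ofCoeffs K c a d) (Finsupp.single 0 1) = d := by
  induction d using Finsupp.induction_linear with
  | zero => simp
  | add d e hd he => rw [map_add, map_add, LinearMap.add_apply, hd, he]
  | single n p =>
      rw [ofCoeffs_single, map_mul, Module.End.mul_apply, rep_xyPow_single_zero, rep_aeval_h,
        Algebra.lsmul_apply, Finsupp.smul_single, smul_eq_mul, mul_one]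

lemma ofCoeffs_injective : Function.Injective (ofCoeffs K c a) :=
  Function.LeftInverse.injective (g := fun x => rep K c a x (Finsupp.single 0 1))
    rep_ofCoeffs_single_zero

lemma ofCoeffs_surjective : Function.Surjective (ofCoeffs K c a) := by
  refine LinearMap.range_eq_top.mp (RingQuot.submodule_eq_top_of_mul_ι_mem _
    ⟨Finsupp.single 0 1, by simp⟩ ?_)
  rintro _ ⟨d, rfl⟩ i
  induction d using Finsupp.induction_linear with
  | zero => simp
  | add d e hd he => rw [map_add, add_mul]; exact Submodule.add_mem _ hd he
  | single n p =>
      obtain ⟨q, n', h⟩ := xyPow_mul_gen (K := K) (c := c) (a := a) n i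
      refine ⟨Finsupp.single n' (p * q), ?_⟩
      rw [ofCoeffs_single, ofCoeffs_single, map_mul, mul_assoc, ← h, mul_assoc]
      rfl

variable (K c a) in
noncomputable def normalForm : (ℤ →₀ K[X]) ≃ₗ[K] ShiftGWA K c a :=
  LinearEquiv.ofBijective (ofCoeffs K c a) ⟨ofCoeffs_injective, ofCoeffs_surjective⟩

lemma normalForm_single (n : ℤ) (p : K[X]) :
    normalForm K c a (Finsupp.single n p) = aeval 𝐡 p * xyPow K c a n :=
  ofCoeffs_single n p

instance : Nontrivial (ShiftGWA K c a) :=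
  (normalForm K c a).injective.nontrivial

lemma h_mul_sub_mul_h (n : ℤ) (p : K[X]) :
    𝐡 * (aeval 𝐡 p * xyPow K c a n) - aeval 𝐡 p * xyPow K c a n * 𝐡 =
      aeval 𝐡 (C (n * c) * p) * xyPow K c a n := by
  rw [mul_assoc, (semiconjBy_xyPow n).eq, ← mul_assoc, ← mul_assoc, ← sub_mul,
    show C (n * c) * p = X * p - p * (X - C (n * c)) by ring]
  simp only [map_sub, map_mul, aeval_X, aeval_C]

lemma normalForm_symm_commutator_apply (x : ShiftGWA K c a) (j : ℤ) :
    (normalForm K c a).symm (𝐡 * x - x * 𝐡) j = C (j * c) * (normalForm K c a).symm x j := by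
  obtain ⟨d, rfl⟩ := (normalForm K c a).surjective x
  induction d using Finsupp.induction_linear with
  | zero => simp
  | add d e hd he =>
      simp only [map_add, mul_add, add_mul, add_sub_add_comm, Finsupp.add_apply, hd, he]
  | single n p =>
      rw [normalForm_single, h_mul_sub_mul_h, ← normalForm_single, ← normalForm_single,
        LinearEquiv.symm_apply_apply, LinearEquiv.symm_apply_apply, Finsupp.single_apply,
        Finsupp.single_apply]
      split_ifs with hnj
      · rw [hnj]
      · rw [mul_zero]

lemma exists_aeval_mul_xyPow_mem [CharZero K] (hc : c ≠ 0) {I : TwoSidedIdeal (ShiftGWA K c a)}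
    {x : ShiftGWA K c a} (hxI : x ∈ I) (hx : x ≠ 0) :
    ∃ (p : K[X]) (n : ℤ), p ≠ 0 ∧ aeval 𝐡 p * xyPow K c a n ∈ I := by
  set e := normalForm K c a
  induction hN : (e.symm x).support.card using Nat.strong_induction_on generalizing x with
  | _ N ih =>
      obtain ⟨n₀, hn₀⟩ : (e.symm x).support.Nonempty := by simpa using hx
      by_cases hsingle : (e.symm x).support ⊆ {n₀}
      · obtain ⟨p, hp⟩ := Finsupp.support_subset_singleton'.mp hsingle
        refine ⟨p, n₀, ?_, ?_⟩
        · rintro rfl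
          simp [hp] at hn₀
        · rwa [← normalForm_single, ← hp, e.apply_symm_apply]
      obtain ⟨n₁, hn₁, hne⟩ := Finset.not_subset.mp hsingle
      set x' := 𝐡 * x - x * 𝐡 - algebraMap K _ (n₁ * c) * x
      have hcoeff (j : ℤ) : e.symm x' j = C ((j - n₁) * c) * e.symm x j := by
        rw [map_sub, ← Algebra.smul_def, map_smul, Finsupp.sub_apply,
          normalForm_symm_commutator_apply, Finsupp.smul_apply, smul_eq_C_mul, ← sub_mul, ← C_sub,
          sub_mul]
      have hsupp : (e.symm x').support = (e.symm x).support.erase n₁ := by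
        ext j
        simp [hcoeff, hc, sub_eq_zero]
      refine ih _ (hN ▸ hsupp ▸ Finset.card_erase_lt_of_mem hn₁) ?_ ?_ rfl
      · exact I.sub_mem (I.sub_mem (I.mul_mem_left _ _ hxI) (I.mul_mem_right _ _ hxI))
          (I.mul_mem_left _ _ hxI)
      · intro hx'
        have : n₀ ∈ (e.symm x').support := by
          rw [hsupp]
          exact Finset.mem_erase.mpr ⟨fun h => hne (h ▸ Finset.mem_singleton_self _), hn₀⟩
        simp [hx'] at this

lemma exists_x_pow_mul_y_pow (ha : a ≠ 0) (k : ℕ) :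
    ∃ w : K[X], w ≠ 0 ∧ 𝐱 ^ k * 𝐲 ^ k = aeval 𝐡 w := by
  induction k with
  | zero => exact ⟨1, one_ne_zero, by simp⟩
  | succ k ih =>
      obtain ⟨w, hw, hxy⟩ := ih
      refine ⟨(w * a).comp (X - C c), ?_, ?_⟩
      · rw [sub_eq_add_neg, ← C_neg]
        exact comp_X_add_C_ne_zero_iff.mpr (mul_ne_zero hw ha)
      · rw [pow_succ', pow_succ, mul_assoc, ← mul_assoc (𝐱 ^ k), hxy, ← mul_assoc, x_mul_aeval,
          mul_assoc, x_mul_y, ← map_mul, mul_comp]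

lemma exists_y_pow_mul_x_pow (ha : a ≠ 0) (k : ℕ) :
    ∃ w : K[X], w ≠ 0 ∧ 𝐲 ^ k * 𝐱 ^ k = aeval 𝐡 w := by
  induction k with
  | zero => exact ⟨1, one_ne_zero, by simp⟩
  | succ k ih =>
      obtain ⟨w, hw, hyx⟩ := ih
      refine ⟨w.comp (X + C c) * a, mul_ne_zero (comp_X_add_C_ne_zero_iff.mpr hw) ha, ?_⟩
      rw [pow_succ', pow_succ, mul_assoc, ← mul_assoc (𝐲 ^ k), hyx, ← mul_assoc, y_mul_aeval,
        mul_assoc, y_mul_x, ← map_mul]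

lemma exists_xyPow_mul_xyPow_neg (ha : a ≠ 0) (n : ℤ) :
    ∃ w : K[X], w ≠ 0 ∧ xyPow K c a n * xyPow K c a (-n) = aeval 𝐡 w := by
  cases n with
  | ofNat k => simpa [xyPow_neg_natCast] using exists_x_pow_mul_y_pow ha k
  | negSucc k =>
      rw [show -Int.negSucc k = ((k + 1 : ℕ) : ℤ) from rfl, xyPow_natCast]
      exact exists_y_pow_mul_x_pow ha (k + 1)

lemma exists_aeval_mem [CharZero K] (hc : c ≠ 0) (ha : a ≠ 0)
    {I : TwoSidedIdeal (ShiftGWA K c a)} (hI : I ≠ ⊥) : ∃ p : K[X], p ≠ 0 ∧ aeval 𝐡 p ∈ I := by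
  obtain ⟨x, hxI, hx⟩ : ∃ x ∈ I, x ≠ 0 := by
    by_contra! h
    exact hI (eq_bot_iff.mpr fun x hx => by simpa using h x hx)
  obtain ⟨p, n, hp, hpI⟩ := exists_aeval_mul_xyPow_mem hc hxI hx
  obtain ⟨w, hw, hvw⟩ := exists_xyPow_mul_xyPow_neg ha n
  refine ⟨p * w, mul_ne_zero hp hw, ?_⟩
  have := I.mul_mem_right _ (xyPow K c a (-n)) hpI
  rwa [mul_assoc, hvw, ← map_mul] at this

lemma aeval_comp_X_add_C_mul_mem {I : TwoSidedIdeal (ShiftGWA K c a)} {p : K[X]}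
    (hp : aeval 𝐡 p ∈ I) : aeval 𝐡 (p.comp (X + C c) * a) ∈ I := by
  simpa [y_mul_aeval, mul_assoc, y_mul_x] using I.mul_mem_right _ 𝐱 (I.mul_mem_left 𝐲 _ hp)

lemma aeval_mul_comp_X_sub_C_mem {I : TwoSidedIdeal (ShiftGWA K c a)} {p : K[X]}
    (hp : aeval 𝐡 p ∈ I) : aeval 𝐡 ((p * a).comp (X - C c)) ∈ I := by
  simpa [x_mul_aeval, mul_assoc, x_mul_y, mul_comp] using
    I.mul_mem_right _ 𝐲 (I.mul_mem_left 𝐱 _ hp)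

theorem isSimpleRing [CharZero K] (hc : c ≠ 0)
    (ha : RootsIncongruentMod (a.map (algebraMap K (AlgebraicClosure K))) (algebraMap K _ c)) :
    IsSimpleRing (ShiftGWA K c a) := by
  have ha₀ : a ≠ 0 := fun h => ha.ne_zero (by rw [h, Polynomial.map_zero])
  refine .of_eq_bot_or_eq_top fun I => or_iff_not_imp_left.mpr fun hI => ?_
  obtain ⟨p, hp, hpI⟩ := exists_aeval_mem hc ha₀ hI
  let J : Ideal K[X] := TwoSidedIdeal.asIdeal (I.comap (aeval 𝐡))
  have hJ (q : K[X]) : q ∈ J ↔ aeval 𝐡 q ∈ I := by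
    simp [J, TwoSidedIdeal.mem_comap]
  have hJtop : J = ⊤ := by
    refine Ideal.eq_top_of_comp_mul_mem hc ha ?_ ?_ ?_
    · exact (Submodule.ne_bot_iff J).mpr ⟨p, (hJ p).mpr hpI, hp⟩
    · exact fun q hq => (hJ _).mpr (aeval_comp_X_add_C_mul_mem ((hJ q).mp hq))
    · exact fun q hq => (hJ _).mpr (aeval_mul_comp_X_sub_C_mem ((hJ q).mp hq))
  exact I.one_mem_iff.mp (by simpa using (hJ 1).mp (hJtop ▸ Submodule.mem_top))

end ShiftGWA

lemma aPoly_map {K L : Type*} [Field K] [Field L] [Algebra K L] (m : ℕ) :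
    (aPoly K m).map (algebraMap K L) = aPoly L m := by
  simp [aPoly, Polynomial.map_prod]

lemma exists_int_of_isRoot_aPoly {F : Type*} [Field F] {m : ℕ} {α : F}
    (h : (aPoly F m).IsRoot α) :
    ∃ A : ℤ, α = A ∧ (A = 1 - m ∨ 2 ≤ A ∧ A ≤ m) := by
  simp only [aPoly, IsRoot, eval_mul, eval_add, eval_X, eval_C, eval_prod, eval_sub,
    mul_eq_zero, Finset.prod_eq_zero_iff, Finset.mem_Icc, sub_eq_zero] at h
  rcases h with h | ⟨j, hj, rfl⟩
  · exact ⟨1 - m, by push_cast; linear_combination h, Or.inl rfl⟩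
  · exact ⟨j, by simp, Or.inr (by omega)⟩

lemma rootsIncongruentMod_aPoly {F : Type*} [Field F] [CharZero F] {m : ℕ} (hm : 2 ≤ m) :
    RootsIncongruentMod (aPoly F m) m := by
  intro α β hα hβ n hn
  obtain ⟨A, rfl, hA⟩ := exists_int_of_isRoot_aPoly hα
  obtain ⟨B, rfl, hB⟩ := exists_int_of_isRoot_aPoly hβ
  have hAB : A - B = n * m := by
    exact_mod_cast (by simpa [zsmul_eq_mul] using hn : (A - B : F) = n * m)
  rcases (by omega : n ≤ -2 ∨ n = -1 ∨ n = 0 ∨ n = 1 ∨ 2 ≤ n) with h | rfl | rfl | rfl | h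
  · have := mul_le_mul_of_nonneg_right h (Int.natCast_nonneg m)
    omega
  · omega
  · rfl
  · omega
  · have := mul_le_mul_of_nonneg_right h (Int.natCast_nonneg m)
    omega

lemma gwaRel2_eq (K : Type*) [Field K] (m : ℕ) :
    gwaRel2 K m = ShiftGWA.Rel K m (aPoly K m) := by
  ext x y
  constructor <;> rintro (_ | _ | _ | _) <;> constructor

/-- the generalized Weyl algebra
`𝒜 = K[h][X,Y;σ^m, (h+m-1)(h-2)⋯(h-m)]` is a simple ring. -/
theorem stmt8 (K : Type*) [Field K] [CharZero K] (m : ℕ) (hm : 2 ≤ m) :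
    IsSimpleRing (GWA2 K m) := by
  have hsimple := ShiftGWA.isSimpleRing (c := (m : K)) (a := aPoly K m)
    (Nat.cast_ne_zero.mpr (by omega))
    (by rw [aPoly_map, map_natCast]; exact rootsIncongruentMod_aPoly hm)
  show IsSimpleRing (RingQuot (gwaRel2 K m))
  rwa [gwaRel2_eq]
end

section
/- In the Weyl algebra A_1 with h = ∂x, δ_1 = (h-2)x, and w_{-1} = (h-m)∂, for i = 2, ..., m-1 and δ_i = (h-i-1)x^i one has w_{-1}δ_i = h(h-m)δ_{i-1} and δ_i w_{-1} = (h-i-1)(h-i-m)δ_{i-1}. -/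
open Polynomial

/-- Defining relation of the Weyl algebra `A₁ = K⟨x,∂ | ∂x - x∂ = 1⟩`. -/
inductive weylRel (K : Type*) [Field K] :
    FreeAlgebra K (Fin 2) → FreeAlgebra K (Fin 2) → Prop
  | rel : weylRel K (FreeAlgebra.ι K 1 * FreeAlgebra.ι K 0)
      (FreeAlgebra.ι K 0 * FreeAlgebra.ι K 1 + 1)

/-- The Weyl algebra `A₁`. -/
abbrev Weyl (K : Type*) [Field K] := RingQuot (weylRel K)

/-- The generator `x` of `A₁`. -/
noncomputable def wx (K : Type*) [Field K] : Weyl K :=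
  RingQuot.mkAlgHom K (weylRel K) (FreeAlgebra.ι K 0)

/-- The generator `∂` of `A₁`. -/
noncomputable def wd (K : Type*) [Field K] : Weyl K :=
  RingQuot.mkAlgHom K (weylRel K) (FreeAlgebra.ι K 1)

/-- `h = ∂x`. -/
noncomputable def wh (K : Type*) [Field K] : Weyl K := wd K * wx K

lemma wrel (K : Type*) [Field K] : wd K * wx K = wx K * wd K + 1 := by
  have h := RingQuot.mkAlgHom_rel K (weylRel.rel (K := K))
  simpa [wd, wx, map_mul, map_add] using h

lemma xdrel (K : Type*) [Field K] : wx K * wd K = wd K * wx K - 1 := by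
  rw [wrel]; noncomm_ring

lemma xh (K : Type*) [Field K] : wx K * wh K = (wh K - 1) * wx K := by
  rw [wh, ← mul_assoc, xdrel]

lemma dh (K : Type*) [Field K] : wd K * wh K = (wh K + 1) * wd K := by
  conv_lhs => rw [wh]
  rw [wrel, wh]; noncomm_ring

lemma dhpow (K : Type*) [Field K] (n : ℕ) :
    wd K * wh K ^ n = (wh K + 1) ^ n * wd K := by
  induction n with
  | zero => simp
  | succ n ih =>
    rw [pow_succ', ← mul_assoc, dh, mul_assoc, ih, pow_succ', mul_assoc]

lemma xhpow (K : Type*) [Field K] (n : ℕ) :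
    wx K * wh K ^ n = (wh K - 1) ^ n * wx K := by
  induction n with
  | zero => simp
  | succ n ih =>
    rw [pow_succ', ← mul_assoc, xh, mul_assoc, ih, pow_succ', mul_assoc]

lemma x_aeval (K : Type*) [Field K] (p : K[X]) :
    wx K * aeval (wh K) p = aeval (wh K) (p.comp (X - 1)) * wx K := by
  induction p using Polynomial.induction_on' with
  | add p q hp hq => simp [add_comp, map_add, mul_add, add_mul, hp, hq]
  | monomial n a =>
    rw [monomial_comp]
    simp only [aeval_monomial, map_mul, map_pow, map_sub, map_one, aeval_C, aeval_X,
      ← Algebra.smul_def]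
    rw [mul_smul_comm, smul_mul_assoc, xhpow]

lemma d_aeval (K : Type*) [Field K] (p : K[X]) :
    wd K * aeval (wh K) p = aeval (wh K) (p.comp (X + 1)) * wd K := by
  induction p using Polynomial.induction_on' with
  | add p q hp hq => simp [add_comp, map_add, mul_add, add_mul, hp, hq]
  | monomial n a =>
    rw [monomial_comp]
    simp only [aeval_monomial, map_mul, map_pow, map_add, map_one, aeval_C, aeval_X,
      ← Algebra.smul_def]
    rw [mul_smul_comm, smul_mul_assoc, dhpow]

lemma xpow_aeval (K : Type*) [Field K] (n : ℕ) (p : K[X]) :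
    wx K ^ n * aeval (wh K) p = aeval (wh K) (p.comp (X - C (n : K))) * wx K ^ n := by
  induction n generalizing p with
  | zero => simp
  | succ n ih =>
    rw [pow_succ, mul_assoc, x_aeval, ← mul_assoc, ih, comp_assoc, mul_assoc]
    congr 2
    simp only [sub_comp, add_comp, neg_comp, X_comp, one_comp, C_add, C_1]
    rw [Nat.cast_add, Nat.cast_one, C_add, C_1]
    ring

/-- in `A₁` with `h = ∂x`, `w₋₁ = (h-m)∂` and `δ_j = (h-j-1)x^j`,
for `2 ≤ i ≤ m-1` one has `w₋₁δᵢ = h(h-m)δ_{i-1}` and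
`δᵢw₋₁ = (h-i-1)(h-i-m)δ_{i-1}`. -/
theorem stmt14 (K : Type*) [Field K] [CharZero K] (m : ℕ) (hm : 3 ≤ m)
    (i : ℕ) (h2 : 2 ≤ i) (hi : i ≤ m - 1) :
    (aeval (wh K) (X - C (m : K)) * wd K) *
          (aeval (wh K) (X - C ((i : K) + 1)) * wx K ^ i) =
        aeval (wh K) (X * (X - C (m : K))) *
          (aeval (wh K) (X - C (i : K)) * wx K ^ (i - 1)) ∧
      (aeval (wh K) (X - C ((i : K) + 1)) * wx K ^ i) *
          (aeval (wh K) (X - C (m : K)) * wd K) =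
        aeval (wh K) ((X - C ((i : K) + 1)) * (X - C ((i : K) + (m : K)))) *
          (aeval (wh K) (X - C (i : K)) * wx K ^ (i - 1)) := by
  have hcast : ((i - 1 : ℕ) : K) = (i : K) - 1 := by
    rw [Nat.cast_sub (by omega), Nat.cast_one]
  have hdx : wd K * wx K ^ i = aeval (wh K) (X : K[X]) * wx K ^ (i - 1) := by
    conv_lhs => rw [show i = (i - 1) + 1 by omega, pow_succ']
    rw [← mul_assoc, aeval_X (R := K), wh]
  have hxd : wx K ^ i * wd K = aeval (wh K) (X - C (i : K)) * wx K ^ (i - 1) := by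
    conv_lhs => rw [show i = (i - 1) + 1 by omega, pow_succ]
    rw [mul_assoc, xdrel, show wd K * wx K = wh K from rfl,
      show wh K - 1 = aeval (wh K) ((X : K[X]) - 1) by simp,
      xpow_aeval, hcast]
    congr 2
    simp only [sub_comp, X_comp, one_comp, C_sub, C_add, C_neg, C_1]
    ring
  constructor
  · rw [mul_assoc, ← mul_assoc (wd K), d_aeval, mul_assoc _ (wd K), hdx,
      ← mul_assoc, ← mul_assoc, ← map_mul, ← map_mul, ← mul_assoc, ← map_mul]
    congr 2
    simp only [sub_comp, add_comp, X_comp, one_comp, C_comp, C_add, C_1]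
    ring
  · rw [mul_assoc, ← mul_assoc (wx K ^ i), xpow_aeval, mul_assoc _ _ (wd K), hxd,
      ← mul_assoc, ← mul_assoc, ← map_mul, ← map_mul, ← mul_assoc, ← map_mul]
    congr 2
    simp only [sub_comp, add_comp, X_comp, one_comp, C_comp, C_add]
    ring
end
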